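/- Let C_4 = ⟨(1 2 3 4)⟩ ≤ S_4 act on Z^4 by cyclically permuting coordinates. For a, b ∈ Z, the point p(a,b) = (1+a, b, −a, −b) is a core point for C_4 (i.e. conv(C_4 · p(a,b)) contains no integer points besides its four vertices... or fewer if the orbit is smaller) if and only if gcd(2a+1, 2b) = 1, with the convention gcd(x, 0) = |x|. -/

import Mathlib

noncomputable section

open scoped RealInnerProductSpace

def permAct {n : ℕ} (γ : Equiv.Perm (Fin n)) (x : EuclideanSpace ℝ (Fin n)) :
    EuclideanSpace ℝ (Fin n) := WithLp.toLp 2 (fun i => x (γ⁻¹ i))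

def allOnes (n : ℕ) : EuclideanSpace ℝ (Fin n) := WithLp.toLp 2 (fun _ => 1)

def intVec {n : ℕ} (z : Fin n → ℤ) : EuclideanSpace ℝ (Fin n) := WithLp.toLp 2 (fun i => (z i : ℝ))

def orbitSet {n : ℕ} (Γ : Subgroup (Equiv.Perm (Fin n))) (x : EuclideanSpace ℝ (Fin n)) :
    Set (EuclideanSpace ℝ (Fin n)) := {y | ∃ γ ∈ Γ, y = permAct γ x}

def IsCorePoint {n : ℕ} (Γ : Subgroup (Equiv.Perm (Fin n))) (z : Fin n → ℤ) : Prop :=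
  ∀ y : Fin n → ℤ, intVec y ∈ convexHull ℝ (orbitSet Γ (intVec z)) →
    intVec y ∈ orbitSet Γ (intVec z)

def stabSub {n : ℕ} (Γ : Subgroup (Equiv.Perm (Fin n))) (v : EuclideanSpace ℝ (Fin n)) :
    Subgroup (Equiv.Perm (Fin n)) where
  carrier := {γ | γ ∈ Γ ∧ permAct γ v = v}
  one_mem' := ⟨Γ.one_mem, by ext i; rfl⟩
  mul_mem' := fun {a b} ha hb => ⟨Γ.mul_mem ha.1 hb.1, by
    have h : permAct (a * b) v = permAct a (permAct b v) := rfl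
    rw [h, hb.2, ha.2]⟩
  inv_mem' := fun {a} ha => ⟨Γ.inv_mem ha.1, by
    conv_lhs => rw [← ha.2]
    have h : permAct a⁻¹ (permAct a v) = permAct (a⁻¹ * a) v := rfl
    rw [h, inv_mul_cancel]; ext i; rfl⟩

/-!
Write `p₀, p₁, p₂, p₃` for the orbit of `p = p(a, b)`, `pₖ` being `p` rotated `k` times. Since
`p₀ + p₂ = (1, 0, 1, 0)` and `p₁ + p₃ = (0, 1, 0, 1)`, the convex hull of the orbit is the join of
the edges `[p₀, p₂]` and `[p₁, p₃]`, on which the functional `x₀ + x₂` takes the values `1` and `0`.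
As this functional is integral on lattice points, every lattice point of the hull lies on one of
the two edges. The edge `[p₀, p₂]` has direction `p₂ - p₀ = -(2a+1, 2b, -(2a+1), -2b)`, and
`[p₁, p₃]` is its rotation. If `gcd(2a+1, 2b) = 1`, a Bézout functional measures the position along
either edge in integer steps, so only the endpoints are lattice points; if the gcd is `g ≥ 2`, then
`p₀ + (p₂ - p₀)/g` is a lattice point of the hull outside the orbit.
-/

open Set

lemma zpowers_finRotate_four :
    (Subgroup.zpowers (finRotate 4) : Set (Equiv.Perm (Fin 4))) =
      {1, finRotate 4, finRotate 4 ^ 2, finRotate 4 ^ 3} := by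
  ext γ
  constructor
  · intro hγ
    obtain ⟨n, rfl : finRotate 4 ^ n = γ⟩ := mem_powers_iff_mem_zpowers.mpr hγ
    rw [pow_eq_pow_mod n (by decide : finRotate 4 ^ 4 = 1)]
    have : n % 4 < 4 := Nat.mod_lt n (by norm_num)
    interval_cases n % 4 <;> simp
  · rintro (rfl | rfl | rfl | rfl)
    exacts [one_mem _, Subgroup.mem_zpowers _, Subgroup.npow_mem_zpowers _ _,
      Subgroup.npow_mem_zpowers _ _]

lemma orbitSet_eq_image {n : ℕ} (Γ : Subgroup (Equiv.Perm (Fin n)))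
    (x : EuclideanSpace ℝ (Fin n)) : orbitSet Γ x = (permAct · x) '' Γ := by
  ext y
  simp only [orbitSet, mem_ofPred_eq, mem_image, SetLike.mem_coe, eq_comm]

lemma orbitSet_finRotate_four (x₀ x₁ x₂ x₃ : ℤ) :
    orbitSet (Subgroup.zpowers (finRotate 4)) (intVec ![x₀, x₁, x₂, x₃]) =
      {intVec ![x₀, x₁, x₂, x₃], intVec ![x₃, x₀, x₁, x₂], intVec ![x₂, x₃, x₀, x₁],
        intVec ![x₁, x₂, x₃, x₀]} := by
  rw [orbitSet_eq_image, zpowers_finRotate_four]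
  simp only [image_insert_eq, image_singleton]
  refine congrArg₂ _ ?_ (congrArg₂ _ ?_ (congrArg₂ _ ?_ (congrArg _ ?_))) <;>
    ext i <;> fin_cases i <;> rfl

section Segment

variable {E : Type*} [AddCommGroup E] [Module ℝ E]

lemma LinearMap.eq_of_mem_segment (f : E →ₗ[ℝ] ℝ) {x y z : E} {c : ℝ} (hy : y ∈ segment ℝ x z)
    (hx : f x = c) (hz : f z = c) : f y = c := by
  obtain ⟨α, β, -, -, hαβ, rfl⟩ := hy
  simp [hx, hz, ← add_mul, hαβ]

lemma eq_or_eq_of_mem_segment_of_map_intCast (f : E →ₗ[ℝ] ℝ) {x y z : E} {m k : ℤ}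
    (hy : y ∈ segment ℝ x z) (hx : f x = m) (hz : f z = m + 1) (hfy : f y = k) :
    y = x ∨ y = z := by
  obtain ⟨α, β, hα, hβ, hαβ, rfl⟩ := hy
  have hβk : β = ((k - m : ℤ) : ℝ) := by
    rw [map_add, map_smul, map_smul, hx, hz, smul_eq_mul, smul_eq_mul] at hfy
    push_cast
    linear_combination hfy - (m : ℝ) * hαβ
  have hβ01 : k - m = 0 ∨ k - m = 1 := by
    have h0 : (0 : ℤ) ≤ k - m := by exact_mod_cast hβk ▸ hβ
    have h1 : k - m ≤ (1 : ℤ) := by exact_mod_cast hβk ▸ (by linarith : β ≤ 1)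
    omega
  rcases hβ01 with h | h
  · left
    rw [h, Int.cast_zero] at hβk
    obtain rfl : α = 1 := by linarith
    simp [hβk]
  · right
    rw [h, Int.cast_one] at hβk
    obtain rfl : α = 0 := by linarith
    simp [hβk]

lemma mem_or_mem_of_mem_convexJoin_of_map_intCast (f : E →ₗ[ℝ] ℝ) {s t : Set E} {y : E} {k : ℤ}
    (hy : y ∈ convexJoin ℝ s t) (hs : ∀ x ∈ s, f x = 1) (ht : ∀ x ∈ t, f x = 0) (hfy : f y = k) :
    y ∈ s ∨ y ∈ t := by
  obtain ⟨x, hx, z, hz, hy⟩ := mem_convexJoin.mp hy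
  rcases eq_or_eq_of_mem_segment_of_map_intCast f (segment_symm ℝ x z ▸ hy) (m := 0)
    (by simpa using ht z hz) (by simpa using hs x hx) hfy with rfl | rfl
  · exact Or.inr hz
  · exact Or.inl hx

lemma add_mem_segment_of_eq_add_smul {x z e : E} {g : ℝ} (hg : 1 ≤ g) (h : z = x + g • e) :
    x + e ∈ segment ℝ x z := by
  rw [segment_eq_image_lineMap]
  refine ⟨g⁻¹, ⟨by positivity, inv_le_one_of_one_le₀ hg⟩, ?_⟩
  rw [AffineMap.lineMap_apply_module', h, add_sub_cancel_left, smul_smul,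
    inv_mul_cancel₀ (by positivity), one_smul, add_comm]

end Segment

lemma intVec_injective {n : ℕ} : Function.Injective (intVec (n := n)) := by
  intro y z h
  ext i
  simpa [intVec] using congrArg (· i) h

lemma intVec_add {n : ℕ} (y z : Fin n → ℤ) : intVec (y + z) = intVec y + intVec z := by
  ext i; simp [intVec]

lemma intVec_smul {n : ℕ} (g : ℤ) (z : Fin n → ℤ) : intVec (g • z) = (g : ℝ) • intVec z := by
  ext i; simp [intVec]

lemma inner_intVec {n : ℕ} (u z : Fin n → ℤ) :
    inner ℝ (intVec u) (intVec z) = ((∑ i, u i * z i : ℤ) : ℝ) := by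
  simp [intVec, PiLp.inner_apply, mul_comm]

lemma eq_or_eq_of_intVec_mem_segment {n : ℕ} {p q y u : Fin n → ℤ}
    (hu : ∑ i, u i * (q i - p i) = 1) (hy : intVec y ∈ segment ℝ (intVec p) (intVec q)) :
    y = p ∨ y = q := by
  have hq : ∑ i, u i * q i = ∑ i, u i * p i + 1 := by
    rw [← hu, ← Finset.sum_add_distrib]
    exact Finset.sum_congr rfl fun i _ ↦ by ring
  have := eq_or_eq_of_mem_segment_of_map_intCast (innerₗ _ (intVec u)) hy
    (inner_intVec u p) (by rw [innerₗ_apply_apply, inner_intVec, hq]; push_cast; rfl)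
    (inner_intVec u y)
  simpa only [intVec_injective.eq_iff] using this

lemma convexHull_orbitSet_eq_convexJoin (a b : ℤ) :
    convexHull ℝ (orbitSet (Subgroup.zpowers (finRotate 4)) (intVec ![1 + a, b, -a, -b])) =
      convexJoin ℝ (segment ℝ (intVec ![1 + a, b, -a, -b]) (intVec ![-a, -b, 1 + a, b]))
        (segment ℝ (intVec ![-b, 1 + a, b, -a]) (intVec ![b, -a, -b, 1 + a])) := by
  rw [orbitSet_finRotate_four, convexJoin_segments]
  congr 2
  exact insert_comm _ _ _

lemma isCorePoint_of_isCoprime {a b : ℤ} (h : IsCoprime (2 * a + 1) (2 * b)) :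
    IsCorePoint (Subgroup.zpowers (finRotate 4)) ![1 + a, b, -a, -b] := by
  obtain ⟨u, v, huv⟩ := h
  intro y hy
  rw [convexHull_orbitSet_eq_convexJoin] at hy
  rw [orbitSet_finRotate_four]
  let f := innerₗ (EuclideanSpace ℝ (Fin 4)) (intVec ![1, 0, 1, 0])
  have hf : ∀ z : Fin 4 → ℤ, f (intVec z) = ((z 0 + z 2 : ℤ) : ℝ) := fun z ↦ by
    simp [f, inner_intVec, Fin.sum_univ_four]
  rcases mem_or_mem_of_mem_convexJoin_of_map_intCast f hy
      (fun x hx ↦ f.eq_of_mem_segment hx (by simp [hf]) (by simp [hf]))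
      (fun x hx ↦ f.eq_of_mem_segment hx (by simp [hf]) (by simp [hf])) (hf y) with h | h
  · rcases eq_or_eq_of_intVec_mem_segment (u := ![-u, -v, 0, 0])
      (by simp only [Fin.sum_univ_four, Matrix.cons_val]; linear_combination huv) h
      with rfl | rfl <;> simp
  · rcases eq_or_eq_of_intVec_mem_segment (u := ![v, -u, 0, 0])
      (by simp only [Fin.sum_univ_four, Matrix.cons_val]; linear_combination huv) h
      with rfl | rfl <;> simp

lemma gcd_eq_one_of_isCorePoint {a b : ℤ}
    (h : IsCorePoint (Subgroup.zpowers (finRotate 4)) ![1 + a, b, -a, -b]) :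
    Int.gcd (2 * a + 1) (2 * b) = 1 := by
  by_contra hg1
  set g : ℤ := ((Int.gcd (2 * a + 1) (2 * b) : ℕ) : ℤ)
  have hg2 : 2 ≤ g := by
    have : Int.gcd (2 * a + 1) (2 * b) ≠ 0 := by
      rw [Ne, Int.gcd_eq_zero_iff]; omega
    omega
  obtain ⟨c, hc⟩ : g ∣ 2 * a + 1 := Int.gcd_dvd_left _ _
  obtain ⟨d, hd⟩ : g ∣ 2 * b := Int.gcd_dvd_right _ _
  have hc0 : c ≠ 0 := by rintro rfl; omega
  have hc1 : c ≠ 2 * a + 1 := by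
    intro h
    rw [h, eq_comm, mul_eq_right₀ (by omega)] at hc
    omega
  have hseg : intVec (![1 + a, b, -a, -b] + ![-c, -d, c, d]) ∈
      segment ℝ (intVec ![1 + a, b, -a, -b]) (intVec ![-a, -b, 1 + a, b]) := by
    have hp₂ : ![-a, -b, 1 + a, b] = ![1 + a, b, -a, -b] + g • ![-c, -d, c, d] := by
      simp only [Matrix.smul_cons, Matrix.smul_empty, Matrix.cons_add_cons,
        Matrix.empty_add_empty, smul_eq_mul, Matrix.vecCons_inj, and_true]
      refine ⟨?_, ?_, ?_, ?_⟩ <;> linarith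
    rw [intVec_add]
    refine add_mem_segment_of_eq_add_smul (g := g) (by exact_mod_cast (by omega : 1 ≤ g)) ?_
    rw [hp₂, intVec_add, intVec_smul]
  have hmem := h (![1 + a, b, -a, -b] + ![-c, -d, c, d]) <| by
    rw [convexHull_orbitSet_eq_convexJoin]
    exact subset_convexJoin_left ⟨_, left_mem_segment ℝ _ _⟩ hseg
  rw [orbitSet_finRotate_four] at hmem
  simp only [mem_insert_iff, mem_singleton_iff, intVec_injective.eq_iff, Matrix.cons_add_cons,
    Matrix.empty_add_empty, Matrix.vecCons_inj] at hmem
  omega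

theorem stmt18 (a b : ℤ) :
    IsCorePoint (Subgroup.zpowers (finRotate 4)) ![1 + a, b, -a, -b] ↔
      Int.gcd (2 * a + 1) (2 * b) = 1 :=
  ⟨gcd_eq_one_of_isCorePoint, fun h ↦
    isCorePoint_of_isCoprime (Int.isCoprime_iff_gcd_eq_one.mpr h)⟩
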